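/- arXiv:1701.04738 — 2 statements merged into one kernel-verified Lean document; each statement's English description precedes it below -/
import Mathlib

section
/- Let S be a finite subset of ℕ², let m ≥ 1 be an integer, and fix a point (i₀,j₀) ∈ S. The following are equivalent: (a) every polynomial f = ∑_{(i,j)∈S} a_{ij} x^i y^j supported on S that vanishes to order ≥ m at (1,1) has a_{i₀j₀} = 0; (b) there exists a polynomial g ∈ ℚ[x,y] of total degree ≤ m−1 such that g(i₀,j₀) ≠ 0 and g(i,j) = 0 for all (i,j) ∈ S with (i,j) ≠ (i₀,j₀). -/
/-!
At `(1,1)`, the derivative `∂ₓᵘ ∂ᵧᵛ` sends `x^i y^j` to the falling-factorial product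
`(i)ᵤ (j)ᵥ`, and the products of falling factorials `(x)ᵤ (y)ᵥ` with `u + v ≤ m - 1` span the
polynomials of total degree `≤ m - 1`. Hence `polyOf S a` vanishes to order `m` exactly when `a`
is orthogonal, over `S`, to the space `W` of functions on `ℕ²` given by polynomials of degree
`≤ m - 1`. By duality in the finite-dimensional space of functions on `S`, every such `a`
vanishes at `p₀` iff some element of `W` is nonzero at `p₀` and vanishes on the rest of `S`.
-/

/-- The polynomial `∑_{(i,j) ∈ S} a_{ij} x^i y^j` supported on the finite set
`S ⊆ ℕ²`, with coefficients `a`. -/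
noncomputable def polyOf (S : Finset (ℕ × ℕ)) (a : ℕ × ℕ → ℚ) : MvPolynomial (Fin 2) ℚ :=
  ∑ p ∈ S, MvPolynomial.C (a p) * MvPolynomial.X 0 ^ p.1 * MvPolynomial.X 1 ^ p.2

/-- `f` vanishes to order `≥ m` at the point `(1,1)`:
`(∂ₓᵘ ∂ᵧᵛ f)(1,1) = 0` for all `u + v ≤ m - 1`. -/
def vanishesToOrder (m : ℕ) (f : MvPolynomial (Fin 2) ℚ) : Prop :=
  ∀ u v : ℕ, u + v ≤ m - 1 →
    MvPolynomial.eval (fun _ => (1 : ℚ))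
      ((fun g => MvPolynomial.pderiv (0 : Fin 2) g)^[u]
        ((fun g => MvPolynomial.pderiv (1 : Fin 2) g)^[v] f)) = 0

open MvPolynomial

theorem MvPolynomial.iterate_pderiv_monomial {R σ : Type*} [CommSemiring R] (i : σ) (k : ℕ)
    (s : σ →₀ ℕ) (a : R) :
    (pderiv i)^[k] (monomial s a) =
      monomial (s - Finsupp.single i k) (a * (s i).descFactorial k) := by
  induction k with
  | zero => simp
  | succ k ih =>
    rw [Function.iterate_succ_apply', ih, pderiv_monomial, tsub_tsub, ← Finsupp.single_add,
      Nat.descFactorial_succ, Finsupp.tsub_apply, Finsupp.single_eq_same]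
    push_cast
    ring_nf

theorem Polynomial.totalDegree_toMvPolynomial_le {R σ : Type*} [CommSemiring R] (p : Polynomial R)
    (i : σ) : (p.toMvPolynomial i).totalDegree ≤ p.natDegree := by
  nontriviality R using Subsingleton.eq_zero, totalDegree_zero
  rw [Polynomial.toMvPolynomial, Polynomial.aeval_eq_sum_range]
  refine (totalDegree_finsetSum _ _).trans (Finset.sup_le fun k hk => ?_)
  refine (totalDegree_smul_le _ _).trans ((totalDegree_pow _ _).trans ?_)
  rw [totalDegree_X, mul_one]
  exact Nat.lt_succ_iff.1 (Finset.mem_range.1 hk)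

theorem Polynomial.span_descPochhammer_eq_degreeLT (R : Type*) [CommRing R] [IsDomain R] (n : ℕ) :
    Submodule.span R (descPochhammer R '' Set.Iio n) = Polynomial.degreeLT R n := by
  let P : Polynomial.Sequence R :=
    ⟨descPochhammer R, fun i => by
      rw [Polynomial.degree_eq_natDegree (monic_descPochhammer R i).ne_zero,
        descPochhammer_natDegree]⟩
  exact P.span_degreeLT fun i _ => by simp [P, (monic_descPochhammer R i).leadingCoeff]

theorem natCast_pow_mem_span_descFactorial {R α : Type*} [CommRing R] [IsDomain R]
    (π : α → ℕ) (i : ℕ) :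
    (fun x => (π x : R) ^ i) ∈
      Submodule.span R ((fun u x => ((π x).descFactorial u : R)) '' Set.Iio (i + 1)) := by
  let ev : Polynomial R →ₗ[R] (α → R) := LinearMap.pi fun x => Polynomial.leval (π x : R)
  have hX : (Polynomial.X ^ i : Polynomial R) ∈
      Submodule.span R (descPochhammer R '' Set.Iio (i + 1)) := by
    rw [Polynomial.span_descPochhammer_eq_degreeLT, Polynomial.mem_degreeLT,
      Polynomial.degree_X_pow]
    exact_mod_cast i.lt_succ_self
  have := Submodule.mem_map_of_mem (f := ev) hX
  rw [Submodule.map_span, Set.image_image] at this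
  have hev : ∀ p, ev p = fun x => p.eval (π x : R) := fun _ => rfl
  simpa only [hev, Polynomial.eval_pow, Polynomial.eval_X, descPochhammer_eval_eq_descFactorial]
    using this

theorem Submodule.forall_annihilator_imp_iff_exists_separating {K ι : Type*} [Field K]
    {S : Finset ι} (W : Submodule K (ι → K)) {p₀ : ι} (hp₀ : p₀ ∈ S) :
    (∀ a : ι → K, (∀ w ∈ W, ∑ q ∈ S, a q * w q = 0) → a p₀ = 0) ↔
      ∃ w ∈ W, w p₀ ≠ 0 ∧ ∀ q ∈ S, q ≠ p₀ → w q = 0 := by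
  classical
  refine ⟨fun h => ?_, ?_⟩
  · by_contra hsep
    let R : (ι → K) →ₗ[K] (S → K) := LinearMap.funLeft K K Subtype.val
    have hδ : Pi.single (⟨p₀, hp₀⟩ : S) (1 : K) ∉ W.map R := by
      rintro ⟨w, hw, hwδ⟩
      refine hsep ⟨w, hw, ?_, fun q hq hne => ?_⟩
      · have hw₀ := congr_fun hwδ ⟨p₀, hp₀⟩
        simp only [R, LinearMap.funLeft_apply, Pi.single_eq_same] at hw₀
        simp [hw₀]
      · simpa [R, hne] using congr_fun hwδ ⟨q, hq⟩
    obtain ⟨φ, hφδ, hφW⟩ := Submodule.exists_dual_map_eq_bot_of_notMem hδ inferInstance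
    let a : ι → K := fun q => if hq : q ∈ S then φ (Pi.single ⟨q, hq⟩ 1) else 0
    have ha : ∀ w ∈ W, ∑ q ∈ S, a q * w q = 0 := by
      intro w hw
      have hφw : φ (R w) = 0 := by
        rw [← Submodule.mem_bot K, ← hφW]
        exact Submodule.mem_map_of_mem (Submodule.mem_map_of_mem hw)
      rw [pi_eq_sum_univ' (R w), map_sum] at hφw
      rw [← Finset.sum_coe_sort S, ← hφw]
      refine Finset.sum_congr rfl fun q _ => ?_
      simp [a, R, mul_comm]
    exact hφδ (by simpa [a, hp₀] using h a ha)
  · rintro ⟨w, hw, hw₀, hwS⟩ a ha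
    have h := ha w hw
    rw [Finset.sum_eq_single_of_mem p₀ hp₀ fun q hq hne => by rw [hwS q hq hne, mul_zero]] at h
    exact (mul_eq_zero.1 h).resolve_right hw₀

noncomputable def evalOnNat : MvPolynomial (Fin 2) ℚ →ₗ[ℚ] (ℕ × ℕ → ℚ) :=
  LinearMap.pi fun q => (aeval ![(q.1 : ℚ), (q.2 : ℚ)]).toLinearMap

theorem evalOnNat_apply (g : MvPolynomial (Fin 2) ℚ) (q : ℕ × ℕ) :
    evalOnNat g q = eval ![(q.1 : ℚ), (q.2 : ℚ)] g := by
  simp [evalOnNat]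

noncomputable def descFactorialSpan (d : ℕ) : Submodule ℚ (ℕ × ℕ → ℚ) :=
  Submodule.span ℚ
    ((fun (uv : ℕ × ℕ) q => (q.1.descFactorial uv.1 : ℚ) * q.2.descFactorial uv.2) ''
      {uv : ℕ × ℕ | uv.1 + uv.2 ≤ d})

theorem descFactorialSpan_mono {d d' : ℕ} (h : d ≤ d') :
    descFactorialSpan d ≤ descFactorialSpan d' :=
  Submodule.span_mono (Set.image_mono fun _ huv => le_trans huv h)

theorem natCast_pow_mul_pow_mem_descFactorialSpan (i j : ℕ) :
    (fun q : ℕ × ℕ => (q.1 : ℚ) ^ i * (q.2 : ℚ) ^ j) ∈ descFactorialSpan (i + j) := by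
  have h := Submodule.mul_mem_mul (natCast_pow_mem_span_descFactorial (R := ℚ) Prod.fst i)
    (natCast_pow_mem_span_descFactorial (R := ℚ) Prod.snd j)
  rw [Submodule.span_mul_span] at h
  refine Submodule.span_mono ?_ h
  rintro _ ⟨_, ⟨u, hu, rfl⟩, _, ⟨v, hv, rfl⟩, rfl⟩
  simp only [Set.mem_Iio] at hu hv
  exact ⟨(u, v), show u + v ≤ i + j by omega, rfl⟩

theorem evalOnNat_mem_descFactorialSpan {g : MvPolynomial (Fin 2) ℚ} {d : ℕ}
    (hg : g.totalDegree ≤ d) : evalOnNat g ∈ descFactorialSpan d := by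
  rw [g.as_sum, map_sum]
  refine Submodule.sum_mem _ fun e he => ?_
  have hed : e 0 + e 1 ≤ d := by
    have := (le_totalDegree he).trans hg
    rwa [Finsupp.sum_fintype _ _ (fun _ => rfl), Fin.sum_univ_two] at this
  have hmono : evalOnNat (monomial e (coeff e g)) =
      coeff e g • fun q : ℕ × ℕ => (q.1 : ℚ) ^ e 0 * (q.2 : ℚ) ^ e 1 := by
    ext q
    simp [evalOnNat_apply, eval_monomial, Finsupp.prod_fintype, Fin.prod_univ_two]
  rw [hmono]
  exact Submodule.smul_mem _ _
    (descFactorialSpan_mono hed (natCast_pow_mul_pow_mem_descFactorialSpan _ _))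

theorem descFactorialSpan_le_map_evalOnNat (d : ℕ) :
    descFactorialSpan d ≤ (restrictTotalDegree (Fin 2) ℚ d).map evalOnNat := by
  rw [descFactorialSpan, Submodule.span_le]
  rintro _ ⟨⟨u, v⟩, huv, rfl⟩
  refine ⟨(descPochhammer ℚ u).toMvPolynomial 0 * (descPochhammer ℚ v).toMvPolynomial 1, ?_, ?_⟩
  · rw [SetLike.mem_coe, mem_restrictTotalDegree]
    refine (totalDegree_mul _ _).trans ((add_le_add (Polynomial.totalDegree_toMvPolynomial_le _ _)
      (Polynomial.totalDegree_toMvPolynomial_le _ _)).trans ?_)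
    simpa [descPochhammer_natDegree] using huv
  · ext q
    simp [evalOnNat_apply, descPochhammer_eval_eq_descFactorial]

theorem map_evalOnNat_restrictTotalDegree (d : ℕ) :
    (restrictTotalDegree (Fin 2) ℚ d).map evalOnNat = descFactorialSpan d :=
  le_antisymm
    (Submodule.map_le_iff_le_comap.2 fun _ hg =>
      evalOnNat_mem_descFactorialSpan ((mem_restrictTotalDegree _ _ _).1 hg))
    (descFactorialSpan_le_map_evalOnNat d)

theorem polyOf_eq_sum_monomial (S : Finset (ℕ × ℕ)) (a : ℕ × ℕ → ℚ) :
    polyOf S a = ∑ q ∈ S, monomial (Finsupp.single 0 q.1 + Finsupp.single 1 q.2) (a q) := by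
  refine Finset.sum_congr rfl fun q _ => ?_
  simp only [X_pow_eq_monomial, C_mul_monomial, monomial_mul, mul_one]

theorem eval_one_iterate_pderiv_polyOf (S : Finset (ℕ × ℕ)) (a : ℕ × ℕ → ℚ) (u v : ℕ) :
    eval (fun _ => (1 : ℚ))
      ((fun g => pderiv (0 : Fin 2) g)^[u] ((fun g => pderiv (1 : Fin 2) g)^[v] (polyOf S a))) =
      ∑ q ∈ S, a q * ((q.1.descFactorial u : ℚ) * q.2.descFactorial v) := by
  have hlin : ∀ (i : Fin 2) (k : ℕ), (fun g => pderiv i g)^[k] =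
      ⇑((pderiv i).toLinearMap ^ k : Module.End ℚ (MvPolynomial (Fin 2) ℚ)) := by
    intro i k; rw [Module.End.coe_pow]; rfl
  rw [hlin, hlin, polyOf_eq_sum_monomial, map_sum, map_sum, map_sum]
  refine Finset.sum_congr rfl fun q _ => ?_
  simp only [Module.End.coe_pow, Derivation.coeFn_coe, iterate_pderiv_monomial]
  simp [eval_monomial, mul_left_comm, mul_comm]

theorem vanishesToOrder_polyOf_iff (S : Finset (ℕ × ℕ)) (m : ℕ) (a : ℕ × ℕ → ℚ) :
    vanishesToOrder m (polyOf S a) ↔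
      ∀ w ∈ descFactorialSpan (m - 1), ∑ q ∈ S, a q * w q = 0 := by
  let L : (ℕ × ℕ → ℚ) →ₗ[ℚ] ℚ := ∑ q ∈ S, a q • LinearMap.proj q
  have hL (w : ℕ × ℕ → ℚ) : L w = ∑ q ∈ S, a q * w q := by simp [L]
  simp only [← hL]
  change _ ↔ descFactorialSpan (m - 1) ≤ LinearMap.ker L
  rw [descFactorialSpan, Submodule.span_le, Set.image_subset_iff]
  simp [vanishesToOrder, Set.subset_def, eval_one_iterate_pderiv_polyOf, hL]

theorem coeff_zero_iff_separating_poly_general (S : Finset (ℕ × ℕ)) (m : ℕ)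
    (p₀ : ℕ × ℕ) (hp₀ : p₀ ∈ S) :
    (∀ a : ℕ × ℕ → ℚ, vanishesToOrder m (polyOf S a) → a p₀ = 0) ↔
      ∃ g : MvPolynomial (Fin 2) ℚ, g.totalDegree ≤ m - 1 ∧
        MvPolynomial.eval ![(p₀.1 : ℚ), (p₀.2 : ℚ)] g ≠ 0 ∧
        ∀ q ∈ S, q ≠ p₀ → MvPolynomial.eval ![(q.1 : ℚ), (q.2 : ℚ)] g = 0 := by
  simp only [vanishesToOrder_polyOf_iff]
  rw [Submodule.forall_annihilator_imp_iff_exists_separating _ hp₀,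
    ← map_evalOnNat_restrictTotalDegree]
  simp [Submodule.mem_map, mem_restrictTotalDegree, evalOnNat_apply]

/-- for a fixed point `p₀ = (i₀,j₀) ∈ S`, every polynomial
supported on `S` vanishing to order `≥ m` at `(1,1)` has coefficient
`a_{i₀ j₀} = 0`, iff there is a polynomial of total degree `≤ m - 1` that is
nonzero at `p₀` and vanishes at every other point of `S`. -/
theorem coeff_zero_iff_separating_poly (S : Finset (ℕ × ℕ)) (m : ℕ) (hm : 1 ≤ m)
    (p₀ : ℕ × ℕ) (hp₀ : p₀ ∈ S) :
    (∀ a : ℕ × ℕ → ℚ, vanishesToOrder m (polyOf S a) → a p₀ = 0) ↔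
      ∃ g : MvPolynomial (Fin 2) ℚ, g.totalDegree ≤ m - 1 ∧
        MvPolynomial.eval ![(p₀.1 : ℚ), (p₀.2 : ℚ)] g ≠ 0 ∧
        ∀ q ∈ S, q ≠ p₀ → MvPolynomial.eval ![(q.1 : ℚ), (q.2 : ℚ)] g = 0 :=
  coeff_zero_iff_separating_poly_general S m p₀ hp₀
end

section
/- Let f ∈ ℚ[x,y] be any nonzero polynomial of total degree ≤ n with f(q) = 0 for all q ∈ Q and f(P_k) = 0 for all 0 ≤ k ≤ n−1. Then f(L) = 0 if and only if n·β = (n+1)·α. -/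
/-!
Write `r^(k)` and `(r)_k` for the rising and falling factorials. The polynomial
`F = ∑_{i+j=n} C(n,i) β^(i) (α+i)^(j) (x-α)_i (y)_j` has degree `≤ n`, and each of its terms
vanishes on `Q`. By Chu–Vandermonde, `F(0, y) = α^(n) (y-β)_n`, which vanishes at the `P_k` but
not at `(0, β+n)`. For `f` as in the theorem, `g = f - c F` with `c` chosen so that `g(0, β+n) = 0`
vanishes on the `n+1` points `(0, β+k)`, `k ≤ n`, so `g = x h`; then `h` has degree `< n` and
vanishes on the triangular grid `Q`, hence `h = 0` (peel off one column `x = α+i` at a time in the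
same way). So `f = c F` with `c ≠ 0`, and Chu–Vandermonde once more, together with
`α (α+1)^(i) = (α+i) α^(i)`, gives `α F(L) = α^(n) n! ((n+1)α - nβ)`.
-/

open Finset Polynomial
open scoped Nat

section Pochhammer

variable {R : Type*} [CommRing R]

theorem descPochhammer_eval_add (n : ℕ) (r s : R) :
    (descPochhammer R n).eval (r + s) = ∑ ij ∈ antidiagonal n,
      n.choose ij.1 * ((descPochhammer R ij.1).eval r * (descPochhammer R ij.2).eval s) := by
  have hsmeval (k : ℕ) (t : R) : (descPochhammer ℤ k).smeval t = (descPochhammer R k).eval t := by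
    rw [← aeval_eq_smeval, aeval_def, ← eval_map, descPochhammer_map]
  simpa only [hsmeval] using Ring.descPochhammer_smeval_add n (Commute.all r s)

theorem sum_antidiagonal_mul_choose_mul_descPochhammer (n : ℕ) (r s : R) :
    ∑ ij ∈ antidiagonal n, (ij.1 : R) * (n.choose ij.1 *
      ((descPochhammer R ij.1).eval r * (descPochhammer R ij.2).eval s)) =
      n * r * (descPochhammer R (n - 1)).eval (r - 1 + s) := by
  cases n with
  | zero => simp
  | succ n =>
    rw [Nat.sum_antidiagonal_succ, Nat.add_sub_cancel, descPochhammer_eval_add, mul_sum]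
    simp only [Nat.cast_zero, zero_mul, zero_add]
    refine sum_congr rfl fun ij _ => ?_
    have hchoose := congrArg (Nat.cast (R := R)) (Nat.add_one_mul_choose_eq n ij.1)
    rw [descPochhammer_succ_left, eval_mul, eval_X, eval_comp, eval_sub, eval_X, eval_one]
    push_cast at hchoose ⊢
    linear_combination
      (-r * ((descPochhammer R ij.1).eval (r - 1) * (descPochhammer R ij.2).eval s)) * hchoose

theorem descPochhammer_eval_neg (k : ℕ) (r : R) :
    (descPochhammer R k).eval (-r) = (-1) ^ k * (ascPochhammer R k).eval r := by
  rw [← neg_neg r, ascPochhammer_eval_neg_eq_descPochhammer, neg_neg, ← mul_assoc, ← mul_pow]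
  simp

theorem ascPochhammer_eval_mul_eval_add (i j : ℕ) (r : R) :
    (ascPochhammer R i).eval r * (ascPochhammer R j).eval (r + i) =
      (ascPochhammer R (i + j)).eval r := by
  rw [← ascPochhammer_mul, eval_mul, eval_comp, eval_add, eval_X, eval_natCast]

theorem mul_ascPochhammer_eval_add_one (i : ℕ) (r : R) :
    r * (ascPochhammer R i).eval (r + 1) = (ascPochhammer R i).eval r * (r + i) := by
  rw [← ascPochhammer_succ_eval, ascPochhammer_succ_left, eval_mul, eval_X, eval_comp, eval_add,
    eval_X, eval_one]

end Pochhammer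

namespace MvPolynomial

section Vanishing

variable {R : Type*} [CommRing R]

theorem totalDegree_X_sub_C [Nontrivial R] {σ : Type*} (i : σ) (a : R) :
    (X i - C a : MvPolynomial σ R).totalDegree = 1 := by
  classical
  apply le_antisymm
  · exact (totalDegree_sub_C_le _ _).trans (totalDegree_X i).le
  · calc 1 = (Finsupp.single i 1).sum (fun _ e => e) := by simp
      _ ≤ _ := le_totalDegree (by
          rw [mem_support_iff, coeff_sub, coeff_X, coeff_C,
            if_neg (Finsupp.single_ne_zero.mpr one_ne_zero).symm]
          simp)

theorem totalDegree_X_sub_C_mul [IsDomain R] {σ : Type*} (i : σ) (a : R) {g : MvPolynomial σ R}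
    (hg : g ≠ 0) : ((X i - C a) * g).totalDegree = g.totalDegree + 1 := by
  have hX : (X i - C a : MvPolynomial σ R) ≠ 0 := fun h => by
    simpa [h] using totalDegree_X_sub_C i a
  rw [totalDegree_mul_of_isDomain hX hg, totalDegree_X_sub_C, add_comm]

theorem totalDegree_eval_C_finSuccEquiv_le {m : ℕ} (f : MvPolynomial (Fin (m + 1)) R) (a : R) :
    ((finSuccEquiv R m f).eval (C a)).totalDegree ≤ f.totalDegree := by
  rw [Polynomial.eval_eq_sum]
  refine (totalDegree_finsetSum _ _).trans (Finset.sup_le fun e he => ?_)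
  calc totalDegree ((finSuccEquiv R m f).coeff e * C a ^ e)
      ≤ totalDegree ((finSuccEquiv R m f).coeff e) + totalDegree (C a ^ e) := totalDegree_mul _ _
    _ = totalDegree ((finSuccEquiv R m f).coeff e) := by rw [← C_pow, totalDegree_C, add_zero]
    _ ≤ f.totalDegree := le_of_add_le_left
        (totalDegree_coeff_finSuccEquiv_add_le f e (Polynomial.mem_support_iff.mp he))

theorem eval_eval_C_finSuccEquiv {m : ℕ} (f : MvPolynomial (Fin (m + 1)) R) (a : R)
    (v : Fin m → R) : eval v ((finSuccEquiv R m f).eval (C a)) = eval (Fin.cons a v) f := by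
  rw [eval_eq_eval_mv_eval', Polynomial.eval_map, ← Polynomial.eval₂_hom, eval_C]

/-- The slice `x₀ = a` is a polynomial in the remaining variables of degree `< #(S i)` vanishing
on the grid `∏ S i`, so it is zero by the combinatorial Nullstellensatz. -/
theorem X_zero_sub_C_dvd_of_eval_cons_eq_zero [IsDomain R] {m : ℕ}
    (f : MvPolynomial (Fin (m + 1)) R) (a : R) (S : Fin m → Finset R)
    (hS : ∀ i, f.totalDegree < #(S i))
    (h : ∀ v : Fin m → R, (∀ i, v i ∈ S i) → eval (Fin.cons a v) f = 0) : X 0 - C a ∣ f := by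
  have hroot : (finSuccEquiv R m f).IsRoot (C a) := by
    refine eq_zero_of_eval_zero_at_prod_finset _ S (fun i => ?_) fun v hv => ?_
    · exact (degreeOf_le_totalDegree _ i).trans_lt
        ((totalDegree_eval_C_finSuccEquiv_le f a).trans_lt (hS i))
    · rw [eval_eval_C_finSuccEquiv]
      exact h v hv
  rw [← map_dvd_iff (finSuccEquiv R m), map_sub, finSuccEquiv_X_zero, finSuccEquiv_apply,
    eval₂Hom_C]
  exact Polynomial.dvd_iff_isRoot.mpr hroot

theorem X_zero_sub_C_dvd_of_eval_eq_zero [IsDomain R] (f : MvPolynomial (Fin 2) R) (a : R)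
    (s : Finset R) (hs : f.totalDegree < #s) (h : ∀ b ∈ s, eval ![a, b] f = 0) : X 0 - C a ∣ f := by
  refine X_zero_sub_C_dvd_of_eval_cons_eq_zero f a (fun _ => s) (fun _ => hs) fun v hv => ?_
  have hv' : (Fin.cons a v : Fin 2 → R) = ![a, v 0] := by
    ext k
    fin_cases k <;> rfl
  rw [hv']
  exact h (v 0) (hv 0)

theorem eq_zero_of_eval_triangle_eq_zero [IsDomain R] (n : ℕ) (f : MvPolynomial (Fin 2) R)
    (hdeg : f.totalDegree < n) (x : ℕ → R) (y : ℕ → ℕ → R) (hx : Set.InjOn x (Set.Iio n))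
    (hy : ∀ i < n, Set.InjOn (y i) (Set.Iio (n - i)))
    (hf : ∀ i j, i + j < n → eval ![x i, y i j] f = 0) : f = 0 := by
  classical
  induction n generalizing f x y with
  | zero => omega
  | succ n ih =>
    obtain ⟨g, rfl⟩ : X 0 - C (x 0) ∣ f := by
      refine X_zero_sub_C_dvd_of_eval_eq_zero f (x 0) ((range (n + 1)).image (y 0)) ?_ ?_
      · rwa [card_image_of_injOn (by rw [coe_range]; simpa using hy 0 (by omega)), card_range]
      · simp only [mem_image, mem_range, forall_exists_index, and_imp]
        rintro _ j hj rfl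
        exact hf 0 j (by omega)
    obtain rfl | hg := eq_or_ne g 0
    · rw [mul_zero]
    rw [totalDegree_X_sub_C_mul _ _ hg] at hdeg
    refine absurd (ih g (by omega) (fun i => x (i + 1)) (fun i => y (i + 1)) ?_ ?_ ?_) hg
    · intro i hi j hj h
      simpa using hx (by simpa using hi) (by simpa using hj) h
    · intro i hi
      simpa using hy (i + 1) (by omega)
    · intro i j hij
      have hx0 : x (i + 1) - x 0 ≠ 0 :=
        sub_ne_zero.mpr fun h => by simpa using hx (by simp; omega) (by simp) h
      simpa [hx0] using hf (i + 1) j (by omega)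

end Vanishing

section Interpolant

variable {R : Type*} [CommRing R]

noncomputable def descPochhammerX {σ : Type*} (i : σ) (a : R) (k : ℕ) : MvPolynomial σ R :=
  ∏ t ∈ range k, (X i - C (a + t))

theorem eval_descPochhammerX {σ : Type*} (v : σ → R) (i : σ) (a : R) (k : ℕ) :
    eval v (descPochhammerX i a k) = (descPochhammer R k).eval (v i - a) := by
  rw [descPochhammerX, descPochhammer_eval_eq_prod_range, map_prod]
  exact prod_congr rfl fun t _ => by simp only [map_sub, eval_X, eval_C]; ring

theorem totalDegree_descPochhammerX_le {σ : Type*} (i : σ) (a : R) (k : ℕ) :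
    (descPochhammerX i a k).totalDegree ≤ k := by
  have hX : (X i : MvPolynomial σ R).totalDegree ≤ 1 :=
    (totalDegree_monomial_le _ _).trans (by simp)
  refine (totalDegree_finsetProd _ _).trans ?_
  refine (sum_le_sum fun t _ => (totalDegree_sub_C_le _ _).trans hX).trans ?_
  simp

noncomputable def vanishingPolynomial (n : ℕ) (α β : R) : MvPolynomial (Fin 2) R :=
  ∑ ij ∈ antidiagonal n, C (n.choose ij.1 * (ascPochhammer R ij.1).eval β *
    (ascPochhammer R ij.2).eval (α + ij.1)) * (descPochhammerX 0 α ij.1 * descPochhammerX 1 0 ij.2)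

variable (n : ℕ) (α β : R)

theorem totalDegree_vanishingPolynomial_le : (vanishingPolynomial n α β).totalDegree ≤ n := by
  refine (totalDegree_finsetSum _ _).trans (Finset.sup_le fun ij hij => ?_)
  refine (totalDegree_mul _ _).trans ?_
  rw [totalDegree_C, zero_add, ← HasAntidiagonal.mem_antidiagonal.mp hij]
  exact (totalDegree_mul _ _).trans
    (add_le_add (totalDegree_descPochhammerX_le _ _ _) (totalDegree_descPochhammerX_le _ _ _))

theorem eval_vanishingPolynomial (x y : R) :
    eval ![x, y] (vanishingPolynomial n α β) = ∑ ij ∈ antidiagonal n,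
      n.choose ij.1 * (ascPochhammer R ij.1).eval β * (ascPochhammer R ij.2).eval (α + ij.1) *
        ((descPochhammer R ij.1).eval (x - α) * (descPochhammer R ij.2).eval y) := by
  simp [vanishingPolynomial, eval_descPochhammerX]

theorem eval_vanishingPolynomial_of_add_lt (a b : ℕ) (h : a + b < n) :
    eval ![α + a, (b : R)] (vanishingPolynomial n α β) = 0 := by
  rw [eval_vanishingPolynomial]
  refine sum_eq_zero fun ij hij => ?_
  rw [HasAntidiagonal.mem_antidiagonal] at hij
  rw [add_sub_cancel_left]
  rcases lt_or_ge a ij.1 with ha | ha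
  · simp [descPochhammer_eval_coe_nat_of_lt ha]
  · simp [descPochhammer_eval_coe_nat_of_lt (show b < ij.2 by omega)]

theorem eval_zero_vanishingPolynomial (y : R) :
    eval ![0, y] (vanishingPolynomial n α β) =
      (ascPochhammer R n).eval α * (descPochhammer R n).eval (y - β) := by
  rw [eval_vanishingPolynomial, sub_eq_neg_add y, descPochhammer_eval_add, mul_sum]
  refine sum_congr rfl fun ij hij => ?_
  rw [← HasAntidiagonal.mem_antidiagonal.mp hij, ← ascPochhammer_eval_mul_eval_add, zero_sub,
    descPochhammer_eval_neg, descPochhammer_eval_neg]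
  ring

theorem mul_eval_neg_one_vanishingPolynomial (y : R) :
    α * eval ![-1, y] (vanishingPolynomial n α β) = (ascPochhammer R n).eval α *
      (α * (descPochhammer R n).eval (-β + y) +
        n * -β * (descPochhammer R (n - 1)).eval (-β - 1 + y)) := by
  rw [eval_vanishingPolynomial, descPochhammer_eval_add,
    ← sum_antidiagonal_mul_choose_mul_descPochhammer, mul_sum, mul_sum, ← sum_add_distrib, mul_sum]
  refine sum_congr rfl fun ij hij => ?_
  have hA := ascPochhammer_eval_mul_eval_add ij.1 ij.2 α
  have hA' := mul_ascPochhammer_eval_add_one ij.1 α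
  rw [HasAntidiagonal.mem_antidiagonal.mp hij] at hA
  rw [show -1 - α = -(α + 1) by ring, descPochhammer_eval_neg, descPochhammer_eval_neg]
  linear_combination (n.choose ij.1 * (ascPochhammer R ij.1).eval β * (-1) ^ ij.1 *
    (descPochhammer R ij.2).eval y * (ascPochhammer R ij.2).eval (α + ij.1)) * hA' +
    (n.choose ij.1 * (ascPochhammer R ij.1).eval β * (-1) ^ ij.1 *
    (descPochhammer R ij.2).eval y * (α + ij.1)) * hA

theorem mul_eval_vanishingPolynomial_L :
    α * eval ![-1, β + n + 1] (vanishingPolynomial n α β) =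
      (ascPochhammer R n).eval α * n ! * ((n + 1) * α - n * β) := by
  have h₁ : (n + 1).descFactorial n = (n + 1)! := by
    simpa using Nat.factorial_mul_descFactorial (Nat.le_succ n)
  have h₂ : n.descFactorial (n - 1) = n ! := by
    simpa [Nat.factorial_eq_one.mpr (by omega : n - (n - 1) ≤ 1)] using
      Nat.factorial_mul_descFactorial (Nat.sub_le n 1)
  rw [mul_eval_neg_one_vanishingPolynomial,
    show -β + (β + n + 1) = ((n + 1 : ℕ) : R) by push_cast; ring,
    show -β - 1 + (β + n + 1) = (n : R) by ring, descPochhammer_eval_eq_descFactorial,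
    descPochhammer_eval_eq_descFactorial, h₁, h₂, Nat.factorial_succ]
  push_cast
  ring

end Interpolant

theorem eq_zero_of_eval_column_of_eval_triangle (n α β : ℕ) (hα : 0 < α)
    (g : MvPolynomial (Fin 2) ℚ) (hdeg : g.totalDegree ≤ n)
    (hQ : ∀ a b : ℕ, a + b < n → eval ![(α : ℚ) + a, (b : ℚ)] g = 0)
    (hP : ∀ k ≤ n, eval ![0, (β : ℚ) + k] g = 0) : g = 0 := by
  obtain ⟨h, rfl⟩ : X 0 - C 0 ∣ g := by
    refine X_zero_sub_C_dvd_of_eval_eq_zero g 0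
      ((range (n + 1)).image fun k : ℕ => (β : ℚ) + k) ?_ ?_
    · rw [card_image_of_injective _ fun a b h => by simpa using h, card_range]
      omega
    · simp only [mem_image, mem_range, forall_exists_index, and_imp]
      rintro _ k hk rfl
      exact hP k (by omega)
  obtain rfl | hh := eq_or_ne h 0
  · rw [mul_zero]
  rw [totalDegree_X_sub_C_mul _ _ hh] at hdeg
  refine absurd (eq_zero_of_eval_triangle_eq_zero n h (by omega) (fun i => (α : ℚ) + i)
    (fun _ j => j) ?_ (fun _ _ => Nat.cast_injective.injOn) fun a b hab => ?_) hh
  · exact ((add_right_injective _).comp Nat.cast_injective).injOn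
  · have hx : (α : ℚ) + a ≠ 0 := by positivity
    simpa [hx] using hQ a b hab

theorem eq_C_mul_vanishingPolynomial (n α β : ℕ) (hα : 0 < α) (f : MvPolynomial (Fin 2) ℚ)
    (hdeg : f.totalDegree ≤ n) (hQ : ∀ a b : ℕ, a + b < n → eval ![(α : ℚ) + a, (b : ℚ)] f = 0)
    (hP : ∀ k < n, eval ![0, (β : ℚ) + k] f = 0) :
    ∃ c, f = C c * vanishingPolynomial n (α : ℚ) β := by
  set F := vanishingPolynomial n (α : ℚ) β
  have hFP (k : ℕ) : eval ![0, (β : ℚ) + k] F =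
      (ascPochhammer ℚ n).eval (α : ℚ) * k.descFactorial n := by
    rw [eval_zero_vanishingPolynomial, add_sub_cancel_left, descPochhammer_eval_eq_descFactorial]
  have hF : eval ![0, (β : ℚ) + n] F ≠ 0 := by
    rw [hFP, Nat.descFactorial_self]
    exact mul_ne_zero (ascPochhammer_pos n _ (by exact_mod_cast hα)).ne' (by positivity)
  set c := eval ![0, (β : ℚ) + n] f / eval ![0, (β : ℚ) + n] F
  refine ⟨c, sub_eq_zero.mp (eq_zero_of_eval_column_of_eval_triangle n α β hα _ ?_ ?_ ?_)⟩
  · refine (totalDegree_sub _ _).trans (max_le hdeg ((totalDegree_mul _ _).trans ?_))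
    rw [totalDegree_C, zero_add]
    exact totalDegree_vanishingPolynomial_le n _ _
  · intro a b hab
    simp [hQ a b hab, F, eval_vanishingPolynomial_of_add_lt n _ _ a b hab]
  · intro k hk
    rcases hk.lt_or_eq with hk | rfl
    · simp [hP k hk, hFP, Nat.descFactorial_eq_zero_iff_lt.mpr hk]
    · simp [c, hF]

theorem eval_vanishingPolynomial_L_eq_zero_iff (n α β : ℕ) (hα : 0 < α) :
    eval ![-1, (β : ℚ) + n + 1] (vanishingPolynomial n (α : ℚ) β) = 0 ↔ n * β = (n + 1) * α := by
  have hA : 0 < (ascPochhammer ℚ n).eval (α : ℚ) := ascPochhammer_pos n _ (by exact_mod_cast hα)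
  rw [← mul_right_inj' (show (α : ℚ) ≠ 0 by positivity), mul_eval_vanishingPolynomial_L, mul_zero,
    mul_eq_zero, or_iff_right (by positivity), sub_eq_zero, eq_comm]
  norm_cast

end MvPolynomial

theorem vanishes_at_L_iff_general (n α β : ℕ) (hα : 1 ≤ α)
    (f : MvPolynomial (Fin 2) ℚ) (hf : f ≠ 0) (hdeg : f.totalDegree ≤ n)
    (hQ : ∀ a b : ℕ, a + b ≤ n - 1 →
      MvPolynomial.eval ![(α : ℚ) + (a : ℚ), (b : ℚ)] f = 0)
    (hP : ∀ k : ℕ, k ≤ n - 1 →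
      MvPolynomial.eval ![(0 : ℚ), (β : ℚ) + (k : ℚ)] f = 0) :
    MvPolynomial.eval ![(-1 : ℚ), (β : ℚ) + (n : ℚ) + 1] f = 0 ↔
      n * β = (n + 1) * α := by
  obtain ⟨c, rfl⟩ := MvPolynomial.eq_C_mul_vanishingPolynomial n α β hα f hdeg
    (fun a b hab => hQ a b (by omega)) (fun k hk => hP k (by omega))
  have hc : c ≠ 0 := by
    rintro rfl
    simp at hf
  rw [map_mul, MvPolynomial.eval_C, mul_eq_zero, or_iff_right hc,
    MvPolynomial.eval_vanishingPolynomial_L_eq_zero_iff n α β hα]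

/-- if `f` is a nonzero polynomial of total degree `≤ n` vanishing
at all points of `Q = {(α+i, j) : 0 ≤ i ≤ n-1, 0 ≤ j ≤ n-1-i}` and at the points
`P_k = (0, β+k)` for `0 ≤ k ≤ n-1`, then `f` vanishes at `L = (-1, β+n+1)` iff
`n·β = (n+1)·α`. -/
theorem vanishes_at_L_iff (n α β : ℕ) (hn : 1 ≤ n) (hα : 1 ≤ α)
    (f : MvPolynomial (Fin 2) ℚ) (hf : f ≠ 0) (hdeg : f.totalDegree ≤ n)
    (hQ : ∀ a b : ℕ, a + b ≤ n - 1 →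
      MvPolynomial.eval ![(α : ℚ) + (a : ℚ), (b : ℚ)] f = 0)
    (hP : ∀ k : ℕ, k ≤ n - 1 →
      MvPolynomial.eval ![(0 : ℚ), (β : ℚ) + (k : ℚ)] f = 0) :
    MvPolynomial.eval ![(-1 : ℚ), (β : ℚ) + (n : ℚ) + 1] f = 0 ↔
      n * β = (n + 1) * α :=
  vanishes_at_L_iff_general n α β hα f hf hdeg hQ hP
end
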